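/- arXiv:1411.1096 — 2 statements merged into one kernel-verified Lean document; each statement's English description precedes it below -/
import Mathlib

section
/- Every subalgebra of E^{23}_q is characterized by two parameters α (the number of diversity atoms a with a;a = complement(a)) and β (the number of diversity atoms a with a;a = 1), where the subalgebra has 1 + α + β atoms, and these parameters satisfy α + 2β < q and 0 < α + β. Moreover, in any subalgebra of E^{23}_q, every diversity atom a satisfies either a;a = 1 or a;a = complement(a), and distinct diversity atoms a, b of the subalgebra satisfy a;b = 0'. -/
/-!
A diversity atom `a` of a subalgebra of E^{23}_q is a join of diversity atoms `e i` of E^{23}_q.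
If it is a single `e i`, then `a ; a = aᶜ`. If it contains two of them, `e i ≠ e j`, then
`a ; a` contains `e i ; e j = 0'` and `e i ; e i = (e i)ᶜ ≥ 1'`, so `a ; a = 1`. Distinct diversity
atoms of the subalgebra are disjoint, so by symmetry their product lies below `0'`, and it contains
the product `0'` of two distinct atoms below them. For the counting, the diversity atoms of the
subalgebra lie over pairwise disjoint sets of the `q - 1` diversity atoms `e i`, at least one each
and at least two for those with `a ; a = 1`.
-/

universe u v

/-- Non-associative relation algebras: Boolean algebras with a binary
relative multiplication `comp`, unary converse `conv`, and identity `ide`. -/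
class NA (α : Type u) extends BooleanAlgebra α where
  comp : α → α → α
  conv : α → α
  ide : α
  comp_ide : ∀ x : α, comp x ide = x
  ide_comp : ∀ x : α, comp ide x = x
  conv_conv : ∀ x : α, conv (conv x) = x
  conv_sup : ∀ x y : α, conv (x ⊔ y) = conv x ⊔ conv y
  comp_sup : ∀ x y z : α, comp x (y ⊔ z) = comp x y ⊔ comp x z
  sup_comp : ∀ x y z : α, comp (x ⊔ y) z = comp x z ⊔ comp y z
  peirce1 : ∀ x y z : α, comp x y ⊓ z = ⊥ ↔ comp (conv x) z ⊓ y = ⊥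
  peirce2 : ∀ x y z : α, comp x y ⊓ z = ⊥ ↔ comp z (conv y) ⊓ x = ⊥

/-- Relation algebras: associative non-associative relation algebras. -/
class RA (α : Type u) extends NA α where
  comp_assoc : ∀ x y z : α, comp (comp x y) z = comp x (comp y z)

namespace NA

variable {α : Type u} [NA α]

/-- The diversity element 0'. -/
def div : α := (ide : α)ᶜ

/-- Converse is the identity. -/
def Symmetric (α : Type u) [NA α] : Prop := ∀ x : α, conv x = x

/-- The identity 1' is an atom. -/
def Integral (α : Type u) [NA α] : Prop := IsAtom (ide : α)

/-- A diversity atom: an atom below 0'. -/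
def DivAtom (x : α) : Prop := IsAtom x ∧ x ≤ (div : α)

/-- A subalgebra of a (non-associative) relation algebra. -/
structure Subalgebra (α : Type u) [NA α] where
  carrier : Set α
  bot_mem : ⊥ ∈ carrier
  top_mem : ⊤ ∈ carrier
  ide_mem : ide ∈ carrier
  compl_mem : ∀ x ∈ carrier, xᶜ ∈ carrier
  sup_mem : ∀ x ∈ carrier, ∀ y ∈ carrier, x ⊔ y ∈ carrier
  comp_mem : ∀ x ∈ carrier, ∀ y ∈ carrier, comp x y ∈ carrier
  conv_mem : ∀ x ∈ carrier, conv x ∈ carrier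

/-- An atom of a subalgebra: a minimal nonzero element of the subalgebra. -/
def Subalgebra.AtomOf (E : Subalgebra α) (a : α) : Prop :=
  a ∈ E.carrier ∧ a ≠ ⊥ ∧ ∀ b ∈ E.carrier, b ≤ a → b = ⊥ ∨ b = a

/-- A diversity atom of a subalgebra. -/
def Subalgebra.DivAtomOf (E : Subalgebra α) (a : α) : Prop :=
  E.AtomOf a ∧ a ≤ (div : α)

/-- `α` is (a copy of) the algebra E^{23}_q with atoms `e 0 = 1', e 1, …, e (q-1)`:
symmetric, integral, distinct diversity atoms multiply to 0', and
`e i ; e i = (e i)ᶜ` for diversity atoms. -/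
def IsE23 (q : ℕ) (e : Fin q → α) : Prop :=
  Symmetric α ∧ Integral α ∧
  Function.Injective e ∧ (∀ i : Fin q, (i : ℕ) = 0 → e i = ide) ∧
  (∀ i, IsAtom (e i)) ∧
  (∀ x : α, IsAtom x → ∃ i, x = e i) ∧
  (∀ i j : Fin q, (i : ℕ) ≠ 0 → (j : ℕ) ≠ 0 → i ≠ j →
    comp (e i) (e j) = (div : α)) ∧
  (∀ i : Fin q, (i : ℕ) ≠ 0 → comp (e i) (e i) = (e i)ᶜ)

/-- The subalgebra `Q` of `α` is a copy of E^{23}_q with atoms `e i`. -/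
def IsE23Sub (Q : Subalgebra α) (q : ℕ) (e : Fin q → α) : Prop :=
  Function.Injective e ∧ (∀ i : Fin q, (i : ℕ) = 0 → e i = ide) ∧
  (∀ i, Q.AtomOf (e i)) ∧
  (∀ x : α, Q.AtomOf x → ∃ i, x = e i) ∧
  (∀ i j : Fin q, (i : ℕ) ≠ 0 → (j : ℕ) ≠ 0 → i ≠ j →
    comp (e i) (e j) = (div : α)) ∧
  (∀ i : Fin q, (i : ℕ) ≠ 0 → comp (e i) (e i) = (e i)ᶜ)

/-- `cov` is a cover map for the subalgebra `E`: it sends each atom of the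
ambient algebra to the atom of `E` containing it. -/
def CoverMap (E : Subalgebra α) (cov : α → α) : Prop :=
  ∀ x : α, IsAtom x → E.AtomOf (cov x) ∧ x ≤ cov x

/-- The ambient atomic algebra is obtained from the subalgebra `B` by
splitting, with cover map `cov`. -/
def Splitting (B : Subalgebra α) (cov : α → α) : Prop :=
  CoverMap B cov ∧
  (∀ x y : α, DivAtom x → DivAtom y →
    (x = conv y → comp x y = comp (cov x) (cov y)) ∧
    (x ≠ conv y → comp x y = comp (cov x) (cov y) ⊓ (div : α)))

/-- The ambient algebra is a special extension of its subalgebra `E`. -/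
def SpecialExt (E : Subalgebra α) : Prop :=
  (∀ a b c : α, E.DivAtomOf a → E.DivAtomOf b → E.DivAtomOf c →
    ¬(a = b ∧ b = c) → c ≤ comp a b →
    ∀ x y : α, IsAtom x → IsAtom y → x ≤ a → y ≤ b → c ≤ comp x y) ∧
  (∀ a : α, E.DivAtomOf a → a ≤ comp a a →
    ∀ x y : α, IsAtom x → IsAtom y → x ≤ a → y ≤ a → comp x y ⊓ a ≠ ⊥)

/-- A flexible atom. -/
def Flexible (a : α) : Prop :=
  DivAtom a ∧ comp a a = ⊤ ∧
  ∀ x : α, DivAtom x → x ≠ a → comp x a = (div : α)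

/-- A flexible atom of a subalgebra. -/
def FlexibleOf (E : Subalgebra α) (a : α) : Prop :=
  E.DivAtomOf a ∧ comp a a = ⊤ ∧
  ∀ x : α, E.DivAtomOf x → x ≠ a → comp x a = (div : α)

/-- A flexible trio of diversity atoms. -/
def FlexTrio (a b c : α) : Prop :=
  DivAtom a ∧ DivAtom b ∧ DivAtom c ∧ a ≠ b ∧ a ≠ c ∧ b ≠ c ∧
  comp a a = ⊤ ∧ comp b b = ⊤ ∧ comp c c = ⊤ ∧
  comp a b = (div : α) ∧ comp a c = (div : α) ∧ comp b c = (div : α) ∧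
  ∀ x : α, IsAtom x → x ∉ ({(ide : α), a, b, c} : Set α) →
    (comp x a = (div : α) ∧ comp x b = (div : α)) ∨
    (comp x a = (div : α) ∧ comp x c = (div : α)) ∨
    (comp x b = (div : α) ∧ comp x c = (div : α))

/-- A flexible trio of diversity atoms of a subalgebra. -/
def FlexTrioOf (E : Subalgebra α) (a b c : α) : Prop :=
  E.DivAtomOf a ∧ E.DivAtomOf b ∧ E.DivAtomOf c ∧ a ≠ b ∧ a ≠ c ∧ b ≠ c ∧
  comp a a = ⊤ ∧ comp b b = ⊤ ∧ comp c c = ⊤ ∧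
  comp a b = (div : α) ∧ comp a c = (div : α) ∧ comp b c = (div : α) ∧
  ∀ d : α, E.DivAtomOf d → d ∉ ({a, b, c} : Set α) →
    (comp d a = (div : α) ∧ comp d b = (div : α)) ∨
    (comp d a = (div : α) ∧ comp d c = (div : α)) ∨
    (comp d b = (div : α) ∧ comp d c = (div : α))

/-- Basic k-by-k matrices of atoms. -/
def BasicMatrix (k : ℕ) (μ : Fin k → Fin k → α) : Prop :=
  (∀ i j, IsAtom (μ i j)) ∧ (∀ i, μ i i ≤ (ide : α)) ∧
  (∀ i j, conv (μ i j) = μ j i) ∧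
  (∀ i j l, μ i j ≤ comp (μ i l) (μ l j))

/-- The identity condition for a basic matrix. -/
def IdCond (k : ℕ) (μ : Fin k → Fin k → α) : Prop :=
  ∀ i j, μ i j = (ide : α) ↔ i = j

/-- The 1-point extension property. -/
def OnePointExt (α : Type u) [NA α] : Prop :=
  ∀ (k : ℕ) (μ : Fin k → Fin k → α), BasicMatrix k μ → IdCond k μ →
  ∀ x y : α, DivAtom x → DivAtom y → ∀ i j : Fin k, i ≠ j → μ i j ≤ comp x y →
  ∃ μ' : Fin (k + 1) → Fin (k + 1) → α, BasicMatrix (k + 1) μ' ∧ IdCond (k + 1) μ' ∧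
    (∀ l m : Fin k, μ' l.castSucc m.castSucc = μ l m) ∧
    μ' i.castSucc (Fin.last k) = x ∧ μ' (Fin.last k) j.castSucc = y

/-- A representation of `α` over a base set `X`. -/
structure Representation (α : Type u) [NA α] (X : Type v) where
  toFun : α → Set (X × X)
  inj : Function.Injective toFun
  map_sup : ∀ a b : α, toFun (a ⊔ b) = toFun a ∪ toFun b
  map_compl : ∀ a : α, toFun aᶜ = toFun ⊤ \ toFun a
  map_comp : ∀ a b : α,
    toFun (comp a b) = {p | ∃ z, (p.1, z) ∈ toFun a ∧ (z, p.2) ∈ toFun b}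
  map_conv : ∀ a : α, toFun (conv a) = {p | (p.2, p.1) ∈ toFun a}
  map_ide : toFun ide = {p | p ∈ toFun ⊤ ∧ p.1 = p.2}

/-- A complete representation: preserves all existing joins. -/
def Representation.IsComplete {α : Type u} [NA α] {X : Type v}
    (r : Representation α X) : Prop :=
  ∀ (S : Set α) (s : α), IsLUB S s → r.toFun s = ⋃ a ∈ S, r.toFun a

/-- Representability. -/
def Representable (α : Type u) [NA α] : Prop :=
  ∃ X : Type u, Nonempty (Representation α X)

/-- A representation of a subalgebra `E` over a base set `X`. -/
structure SubRepresentation (E : Subalgebra α) (X : Type v) where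
  toFun : α → Set (X × X)
  inj : ∀ x ∈ E.carrier, ∀ y ∈ E.carrier, toFun x = toFun y → x = y
  map_sup : ∀ x ∈ E.carrier, ∀ y ∈ E.carrier, toFun (x ⊔ y) = toFun x ∪ toFun y
  map_compl : ∀ x ∈ E.carrier, toFun xᶜ = toFun ⊤ \ toFun x
  map_comp : ∀ x ∈ E.carrier, ∀ y ∈ E.carrier,
    toFun (comp x y) = {p | ∃ z, (p.1, z) ∈ toFun x ∧ (z, p.2) ∈ toFun y}
  map_conv : ∀ x ∈ E.carrier, toFun (conv x) = {p | (p.2, p.1) ∈ toFun x}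
  map_ide : toFun ide = {p | p ∈ toFun ⊤ ∧ p.1 = p.2}

/-- A homomorphism of (non-associative) relation algebras. -/
structure Hom (α : Type u) (β : Type v) [NA α] [NA β] where
  toFun : α → β
  map_sup : ∀ a b : α, toFun (a ⊔ b) = toFun a ⊔ toFun b
  map_compl : ∀ a : α, toFun aᶜ = (toFun a)ᶜ
  map_comp : ∀ a b : α, toFun (comp a b) = comp (toFun a) (toFun b)
  map_conv : ∀ a : α, toFun (conv a) = conv (toFun a)
  map_ide : toFun ide = ide

/-- The thinning relation T(i,j,k) ⟺ (i ≤ j = k) ∨ (j ≤ k = i) ∨ (k ≤ i = j). -/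
def T3 (i j k : ℕ) : Prop :=
  (i ≤ j ∧ j = k) ∨ (j ≤ k ∧ k = i) ∨ (k ≤ i ∧ i = j)

/-- The type of diversity atoms of `α`. -/
abbrev DAt (α : Type u) [NA α] : Type u := {x : α // DivAtom x}

/-- Atoms of the algebra C_E(A): the identity atom `none` together with
copies `some (x, i)` of each diversity atom `x` of `A`, for `i ∈ ω`. -/
abbrev CAtom (α : Type u) [NA α] : Type u := Option (DAt α × ℕ)

/-- The cycle relation of the atom structure of C_E(A), relative to the cover
map `cov` of the subalgebra E. -/
def Cyc (cov : α → α) : CAtom α → CAtom α → CAtom α → Prop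
  | none, none, none => True
  | none, some p, some q => p = q
  | some p, none, some q => p = q
  | some p, some q, none => p = q
  | some p, some q, some r =>
      r.1.1 ≤ comp p.1.1 q.1.1 ∧
      (cov p.1.1 = cov q.1.1 ∧ cov q.1.1 = cov r.1.1 → T3 p.2 q.2 r.2)
  | _, _, _ => False

/-- Relative multiplication in the complex algebra C_E(A). -/
def Ccomp (cov : α → α) (X Y : Set (CAtom α)) : Set (CAtom α) :=
  {w | ∃ u ∈ X, ∃ v ∈ Y, Cyc cov u v w}

/-- The element J(a, n) of C_E(A). -/
def Jel (a : α) (n : ℕ) : Set (CAtom α) :=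
  {w | (∃ p : DAt α × ℕ, w = some p ∧ p.1.1 ≤ a ∧ n ≤ p.2) ∨
       (w = none ∧ (ide : α) ≤ a)}

/-- The atom set B_n of the finite subalgebra of C_E(A). -/
def Bset (E : Subalgebra α) (n : ℕ) : Set (Set (CAtom α)) :=
  {s | s = ({none} : Set (CAtom α))} ∪
  {s | ∃ (x : DAt α) (i : ℕ), i < n ∧ s = {some (x, i)}} ∪
  {s | ∃ a : α, E.DivAtomOf a ∧ s = Jel a n}

/-- Subalgebra of C_E(A) generated by a set `G` of elements. -/
inductive GenFrom (cov : α → α) (G : Set (Set (CAtom α))) : Set (CAtom α) → Prop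
  | base {s : Set (CAtom α)} : s ∈ G → GenFrom cov G s
  | bot : GenFrom cov G ∅
  | idel : GenFrom cov G ({none} : Set (CAtom α))
  | compl {s : Set (CAtom α)} : GenFrom cov G s → GenFrom cov G sᶜ
  | sup {s t : Set (CAtom α)} : GenFrom cov G s → GenFrom cov G t →
      GenFrom cov G (s ∪ t)
  | cmp {s t : Set (CAtom α)} : GenFrom cov G s → GenFrom cov G t →
      GenFrom cov G (Ccomp cov s t)

/-- Membership in the subalgebra B of C_E(A) generated by the atoms. -/
def Gen (cov : α → α) : Set (CAtom α) → Prop :=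
  GenFrom cov {s | ∃ w : CAtom α, s = {w}}

end NA

open Finset

theorem exists_atoms_ne_le_of_not_isAtom {β : Type*} [BooleanAlgebra β] [IsAtomic β] {a : β}
    (h0 : a ≠ ⊥) (h : ¬IsAtom a) : ∃ x, IsAtom x ∧ ∃ y, IsAtom y ∧ x ≤ a ∧ y ≤ a ∧ x ≠ y := by
  obtain ⟨x, hx, hxa⟩ := (eq_bot_or_exists_atom_le a).resolve_left h0
  have hrest : a ⊓ xᶜ ≠ ⊥ := fun hbot => by
    rcases hx.le_iff.1 (disjoint_compl_right_iff.1 (disjoint_iff.2 hbot)) with rfl | rfl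
    exacts [h0 rfl, h hx]
  obtain ⟨y, hy, hyx⟩ := (eq_bot_or_exists_atom_le _).resolve_left hrest
  refine ⟨x, hx, y, hy, hxa, hyx.trans inf_le_left, ?_⟩
  rintro rfl
  exact hx.1 (le_compl_self.1 (hyx.trans inf_le_right))

section AtomsBelow

variable {β : Type*} [BooleanAlgebra β] [Fintype β]

open Classical in
noncomputable def atomsBelow (a : β) : Finset β := {x | IsAtom x ∧ x ≤ a}

@[simp]
theorem mem_atomsBelow {a x : β} : x ∈ atomsBelow a ↔ IsAtom x ∧ x ≤ a := by
  simp [atomsBelow]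

theorem atomsBelow_mono {a b : β} (h : a ≤ b) : atomsBelow a ⊆ atomsBelow b := fun _ hx =>
  mem_atomsBelow.2 ⟨(mem_atomsBelow.1 hx).1, (mem_atomsBelow.1 hx).2.trans h⟩

theorem disjoint_atomsBelow {a b : β} (h : Disjoint a b) :
    Disjoint (atomsBelow a) (atomsBelow b) :=
  disjoint_left.2 fun _ hxa hxb => (mem_atomsBelow.1 hxa).1.1 <|
    disjoint_self.1 (h.mono (mem_atomsBelow.1 hxa).2 (mem_atomsBelow.1 hxb).2)

theorem atomsBelow_nonempty [IsAtomic β] {a : β} (h : a ≠ ⊥) : (atomsBelow a).Nonempty :=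
  let ⟨x, hx, hxa⟩ := (eq_bot_or_exists_atom_le a).resolve_left h
  ⟨x, mem_atomsBelow.2 ⟨hx, hxa⟩⟩

theorem one_lt_card_atomsBelow [IsAtomic β] {a : β} (h0 : a ≠ ⊥) (h : ¬IsAtom a) :
    1 < #(atomsBelow a) := by
  obtain ⟨x, hx, y, hy, hxa, hya, hxy⟩ := exists_atoms_ne_le_of_not_isAtom h0 h
  exact one_lt_card.2 ⟨x, mem_atomsBelow.2 ⟨hx, hxa⟩, y, mem_atomsBelow.2 ⟨hy, hya⟩, hxy⟩

theorem sum_card_atomsBelow_le {s : Finset β} {c : β} (hs : (s : Set β).PairwiseDisjoint id)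
    (hc : ∀ a ∈ s, a ≤ c) : ∑ a ∈ s, #(atomsBelow a) ≤ #(atomsBelow c) := by
  classical
  rw [← card_biUnion (t := atomsBelow) fun a ha b hb hab => disjoint_atomsBelow (hs ha hb hab)]
  exact card_le_card (biUnion_subset.2 fun a ha => atomsBelow_mono (hc a ha))

end AtomsBelow

namespace NA

variable {α : Type u} [NA α]

theorem comp_mono {a b c d : α} (hac : a ≤ c) (hbd : b ≤ d) : comp a b ≤ comp c d :=
  calc comp a b ≤ comp a b ⊔ comp c b := le_sup_left
    _ = comp c b := by rw [← sup_comp, sup_eq_right.2 hac]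
    _ ≤ comp c b ⊔ comp c d := le_sup_left
    _ = comp c d := by rw [← comp_sup, sup_eq_right.2 hbd]

theorem comp_le_div_iff {a b : α} : comp a b ≤ div ↔ Disjoint (conv a) b := by
  rw [div, le_compl_iff_disjoint_right, disjoint_iff, peirce1, comp_ide, disjoint_iff]

theorem le_div_iff_ne_ide (hint : Integral α) {x : α} (hx : IsAtom x) : x ≤ div ↔ x ≠ ide := by
  refine le_compl_iff_disjoint_right.trans ⟨?_, hx.disjoint_of_ne hint⟩
  rintro h rfl
  exact hx.1 (disjoint_self.1 h)

theorem card_atomsBelow_div_add_one [Fintype α] (hint : Integral α) :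
    #(atomsBelow (div : α)) + 1 = #(atomsBelow (⊤ : α)) := by
  classical
  have : atomsBelow (div : α) = (atomsBelow ⊤).erase ide := by
    ext x
    simp only [mem_erase, mem_atomsBelow, le_top, and_true]
    exact ⟨fun h => ⟨(le_div_iff_ne_ide hint h.1).1 h.2, h.1⟩,
      fun h => ⟨h.2, (le_div_iff_ne_ide hint h.2).2 h.1⟩⟩
  rw [this, card_erase_add_one (mem_atomsBelow.2 ⟨hint, le_top⟩)]

namespace Subalgebra

variable (E : Subalgebra α)

theorem inf_mem {x y : α} (hx : x ∈ E.carrier) (hy : y ∈ E.carrier) : x ⊓ y ∈ E.carrier := by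
  simpa using E.compl_mem _ (E.sup_mem _ (E.compl_mem _ hx) _ (E.compl_mem _ hy))

variable {E} in
theorem AtomOf.disjoint {a b : α} (ha : E.AtomOf a) (hb : E.AtomOf b) (hab : a ≠ b) :
    Disjoint a b := by
  rw [disjoint_iff]
  refine (ha.2.2 _ (E.inf_mem ha.1 hb.1) inf_le_left).resolve_right fun h => hab ?_
  exact (hb.2.2 a ha.1 (inf_eq_left.1 h)).resolve_left ha.2.1

theorem atomOf_iff (hint : Integral α) {a : α} : E.AtomOf a ↔ a = ide ∨ E.DivAtomOf a := by
  refine ⟨fun ha => ?_, ?_⟩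
  · rcases ha.2.2 _ (E.inf_mem ha.1 E.ide_mem) inf_le_left with h | h
    · exact Or.inr ⟨ha, le_compl_iff_disjoint_right.2 (disjoint_iff.2 h)⟩
    · exact Or.inl ((hint.le_iff.1 (inf_eq_left.1 h)).resolve_left ha.2.1)
  · rintro (rfl | ha)
    exacts [⟨E.ide_mem, hint.1, fun b _ hb => hint.le_iff.1 hb⟩, ha.1]

theorem card_atomOf [Finite α] (hint : Integral α) :
    Nat.card {a // E.AtomOf a} = 1 + Nat.card {a // E.DivAtomOf a} := by
  classical
  have hdisj : Disjoint (· = ide) E.DivAtomOf := disjoint_iff.2 <| funext fun a => eq_false <| by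
    rintro ⟨rfl, h⟩
    exact h.1.2.1 (le_compl_self.1 h.2)
  rw [Nat.card_congr ((Equiv.subtypeEquivRight fun a => E.atomOf_iff hint).trans
    (subtypeOrEquiv _ _ hdisj)), Nat.card_sum, Nat.card_unique]

theorem exists_atomOf_le [Finite α] {x : α} (hx : x ∈ E.carrier) (hx0 : x ≠ ⊥) :
    ∃ a, E.AtomOf a ∧ a ≤ x := by
  obtain ⟨a, hax, ⟨haE, ha0⟩, hmin⟩ :=
    exists_minimal_le_of_wellFoundedLT (fun b => b ∈ E.carrier ∧ b ≠ ⊥) x ⟨hx, hx0⟩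
  refine ⟨a, ⟨haE, ha0, fun b hbE hba => or_iff_not_imp_left.2 fun hb0 => ?_⟩, hax⟩
  exact le_antisymm hba (hmin ⟨hbE, hb0⟩ hba)

end Subalgebra

namespace IsE23

variable {q : ℕ} {e : Fin q → α}

theorem exists_eq_of_divAtom (hE : IsE23 q e) {x : α} (hx : DivAtom x) :
    ∃ i : Fin q, x = e i ∧ (i : ℕ) ≠ 0 := by
  obtain ⟨i, rfl⟩ := hE.2.2.2.2.2.1 x hx.1
  refine ⟨i, rfl, fun h0 => hx.1.1 ?_⟩
  have hle := hx.2
  rw [hE.2.2.2.1 i h0] at hle ⊢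
  exact le_compl_self.1 hle

theorem comp_self_of_divAtom (hE : IsE23 q e) {x : α} (hx : DivAtom x) : comp x x = xᶜ := by
  obtain ⟨i, rfl, hi⟩ := hE.exists_eq_of_divAtom hx
  exact hE.2.2.2.2.2.2.2 i hi

theorem comp_of_divAtom_of_ne (hE : IsE23 q e) {x y : α} (hx : DivAtom x) (hy : DivAtom y)
    (hxy : x ≠ y) : comp x y = div := by
  obtain ⟨i, rfl, hi⟩ := hE.exists_eq_of_divAtom hx
  obtain ⟨j, rfl, hj⟩ := hE.exists_eq_of_divAtom hy
  exact hE.2.2.2.2.2.2.1 i j hi hj (ne_of_apply_ne e hxy)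

theorem comp_self_of_not_isAtom [IsAtomic α] (hE : IsE23 q e) {a : α} (ha : a ≠ ⊥)
    (had : a ≤ div) (hna : ¬IsAtom a) : comp a a = ⊤ := by
  obtain ⟨x, hx, y, hy, hxa, hya, hxy⟩ := exists_atoms_ne_le_of_not_isAtom ha hna
  have hxd : DivAtom x := ⟨hx, hxa.trans had⟩
  have hdiv : div ≤ comp a a :=
    hE.comp_of_divAtom_of_ne hxd ⟨hy, hya.trans had⟩ hxy ▸ comp_mono hxa hya
  have hide : ide ≤ comp a a :=
    (le_compl_comm.1 hxd.2).trans (hE.comp_self_of_divAtom hxd ▸ comp_mono hxa hxa)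
  rw [eq_top_iff, ← sup_compl_eq_top (x := (ide : α))]
  exact sup_le hide hdiv

theorem comp_self_eq_top_or_compl [IsAtomic α] (hE : IsE23 q e) {a : α} (ha : a ≠ ⊥)
    (had : a ≤ div) : comp a a = ⊤ ∨ comp a a = aᶜ := by
  by_cases h : IsAtom a
  · exact Or.inr (hE.comp_self_of_divAtom ⟨h, had⟩)
  · exact Or.inl (hE.comp_self_of_not_isAtom ha had h)

theorem comp_of_disjoint [IsAtomic α] (hE : IsE23 q e) {a b : α} (ha : a ≠ ⊥) (hb : b ≠ ⊥)
    (had : a ≤ div) (hbd : b ≤ div) (hab : Disjoint a b) : comp a b = div := by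
  refine le_antisymm (comp_le_div_iff.2 (by rwa [hE.1 a])) ?_
  obtain ⟨x, hx, hxa⟩ := (eq_bot_or_exists_atom_le a).resolve_left ha
  obtain ⟨y, hy, hyb⟩ := (eq_bot_or_exists_atom_le b).resolve_left hb
  have hxy : x ≠ y := by
    rintro rfl
    exact hx.1 (disjoint_self.1 (hab.mono hxa hyb))
  exact hE.comp_of_divAtom_of_ne ⟨hx, hxa.trans had⟩ ⟨hy, hyb.trans hbd⟩ hxy ▸ comp_mono hxa hyb

theorem card_atomsBelow_top [Fintype α] (hE : IsE23 q e) : #(atomsBelow (⊤ : α)) = q := by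
  have : atomsBelow (⊤ : α) = univ.map ⟨e, hE.2.2.1⟩ := by
    ext x
    simp only [mem_atomsBelow, le_top, and_true, mem_map, mem_univ, true_and,
      Function.Embedding.coeFn_mk]
    exact ⟨fun hx => (hE.2.2.2.2.2.1 x hx).imp fun _ h => h.symm,
      by rintro ⟨i, rfl⟩; exact hE.2.2.2.2.1 i⟩
  rw [this, card_map, card_univ, Fintype.card_fin]

theorem card_atomsBelow_div_add_one [Fintype α] (hE : IsE23 q e) :
    #(atomsBelow (div : α)) + 1 = q := by
  rw [NA.card_atomsBelow_div_add_one hE.2.1, hE.card_atomsBelow_top]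

theorem div_ne_bot [Fintype α] (hE : IsE23 q e) (hq : 2 ≤ q) : (div : α) ≠ ⊥ := by
  have := hE.card_atomsBelow_div_add_one
  obtain ⟨x, hx⟩ : (atomsBelow (div : α)).Nonempty := card_pos.1 (by omega)
  exact ne_bot_of_le_ne_bot (mem_atomsBelow.1 hx).1.1 (mem_atomsBelow.1 hx).2

variable (E : Subalgebra α)

theorem card_divAtomOf [Finite α] (hE : IsE23 q e) :
    Nat.card {a // E.DivAtomOf a} = Nat.card {a // E.DivAtomOf a ∧ comp a a = aᶜ} +
      Nat.card {a // E.DivAtomOf a ∧ comp a a = ⊤} := by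
  classical
  have hdisj : Disjoint (fun a => E.DivAtomOf a ∧ comp a a = aᶜ)
      (fun a => E.DivAtomOf a ∧ comp a a = ⊤) :=
    disjoint_iff.2 <| funext fun a => eq_false fun ⟨hA, hB⟩ =>
      hA.1.1.2.1 (compl_eq_top.1 (hA.2.symm.trans hB.2))
  rw [← Nat.card_sum, ← Nat.card_congr (subtypeOrEquiv _ _ hdisj)]
  refine Nat.card_congr (Equiv.subtypeEquivRight fun a => ⟨fun ha => ?_, (·.elim (·.1) (·.1))⟩)
  exact (hE.comp_self_eq_top_or_compl ha.1.2.1 ha.2).symm.imp (⟨ha, ·⟩) (⟨ha, ·⟩)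

theorem card_divAtomOf_pos [Fintype α] (hE : IsE23 q e) (hq : 2 ≤ q) :
    0 < Nat.card {a // E.DivAtomOf a} := by
  obtain ⟨a, ha, had⟩ := E.exists_atomOf_le (E.compl_mem _ E.ide_mem) (hE.div_ne_bot hq)
  exact Nat.card_pos_iff.2 ⟨⟨⟨a, ha, had⟩⟩, inferInstance⟩

theorem card_add_two_mul_card_lt [Fintype α] (hE : IsE23 q e) :
    Nat.card {a // E.DivAtomOf a ∧ comp a a = aᶜ} +
      2 * Nat.card {a // E.DivAtomOf a ∧ comp a a = ⊤} < q := by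
  classical
  simp only [Nat.card_eq_fintype_card, Fintype.card_subtype]
  set A : Finset α := {a | E.DivAtomOf a ∧ comp a a = aᶜ}
  set B : Finset α := {a | E.DivAtomOf a ∧ comp a a = ⊤}
  have hAB : Disjoint A B :=
    disjoint_filter.2 fun _ _ hA hB => hA.1.1.2.1 (compl_eq_top.1 (hA.2.symm.trans hB.2))
  have hA : #A * 1 ≤ ∑ a ∈ A, #(atomsBelow a) := by
    refine smul_eq_mul #A 1 ▸ card_nsmul_le_sum _ _ _ fun a ha => ?_
    exact card_pos.2 (atomsBelow_nonempty (mem_filter.1 ha).2.1.1.2.1)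
  have hB : #B * 2 ≤ ∑ a ∈ B, #(atomsBelow a) := by
    refine smul_eq_mul #B 2 ▸ card_nsmul_le_sum _ _ _ fun a ha => ?_
    obtain ⟨⟨⟨-, ha0, -⟩, had⟩, htop⟩ := (mem_filter.1 ha).2
    refine one_lt_card_atomsBelow ha0 fun hat => ha0 (compl_eq_top.1 ?_)
    rw [← hE.comp_self_of_divAtom ⟨hat, had⟩, htop]
  have hdivAtom : ∀ a ∈ A ∪ B, E.DivAtomOf a := by
    simp only [A, B, mem_union, mem_filter, mem_univ, true_and]
    rintro a (h | h) <;> exact h.1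
  have hsum : ∑ a ∈ A ∪ B, #(atomsBelow a) ≤ #(atomsBelow (div : α)) :=
    sum_card_atomsBelow_le (fun a ha b hb hab => (hdivAtom a ha).1.disjoint (hdivAtom b hb).1 hab)
      fun a ha => (hdivAtom a ha).2
  have := hE.card_atomsBelow_div_add_one
  rw [sum_union hAB] at hsum
  omega

end IsE23

end NA

/-- Every subalgebra of E^{23}_q is characterized by the two
parameters α (number of diversity atoms with a;a = aᶜ) and β (number of
diversity atoms with a;a = 1); it has 1 + α + β atoms, α + 2β < q and
0 < α + β; moreover every diversity atom a of the subalgebra satisfies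
a;a = 1 or a;a = aᶜ, and distinct diversity atoms multiply to 0'. -/
theorem stmt3 {α : Type} [RA α] [Fintype α] (q : ℕ) (hq : 4 ≤ q)
    (e : Fin q → α) (hE : NA.IsE23 q e) (E : NA.Subalgebra α) :
    (∀ a : α, E.DivAtomOf a → NA.comp a a = ⊤ ∨ NA.comp a a = aᶜ) ∧
    (∀ a b : α, E.DivAtomOf a → E.DivAtomOf b → a ≠ b →
      NA.comp a b = (NA.div : α)) ∧
    Nat.card {a : α // E.AtomOf a} =
      1 + Nat.card {a : α // E.DivAtomOf a ∧ NA.comp a a = aᶜ} +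
        Nat.card {a : α // E.DivAtomOf a ∧ NA.comp a a = ⊤} ∧
    Nat.card {a : α // E.DivAtomOf a ∧ NA.comp a a = aᶜ} +
      2 * Nat.card {a : α // E.DivAtomOf a ∧ NA.comp a a = ⊤} < q ∧
    0 < Nat.card {a : α // E.DivAtomOf a ∧ NA.comp a a = aᶜ} +
      Nat.card {a : α // E.DivAtomOf a ∧ NA.comp a a = ⊤} := by
  have hsplit := hE.card_divAtomOf E
  have hpos := hE.card_divAtomOf_pos E (by omega)
  refine ⟨fun a ha => hE.comp_self_eq_top_or_compl ha.1.2.1 ha.2,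
    fun a b ha hb hab => hE.comp_of_disjoint ha.1.2.1 hb.1.2.1 ha.2 hb.2 (ha.1.disjoint hb.1 hab),
    ?_, hE.card_add_two_mul_card_lt E, by omega⟩
  rw [E.card_atomOf hE.2.1, hsplit, add_assoc]
end

section
/- For finite symmetric integral relation algebras E ⊆ A, the map a ↦ J(a,0) is an embedding of A into the complete atomic non-associative relation algebra C_E(A); in particular, for diversity atoms x, y, z of A and any index k ∈ ω, the atom z^(k) lies below J(x,0);J(y,0) in C_E(A) if and only if z ≤ x;y in A. -/
universe u v

/-!
Every atom of C_E(A) lies over an atom of A: the identity atom over 1', and each copy x^(i)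
over x. Membership of an atom in J(a,0) depends only on the atom of A below it, so since A is
atomic, J(·,0) preserves the Boolean operations and is injective. A cycle of C_E(A) projects
to a cycle of A (for [x^(i), x^(i), 1'] this is 1' ≤ x;x, which holds in symmetric integral
algebras). Conversely, if z ≤ x;y then x^(k), y^(k), z^(k) form a cycle for every k, because
T(k,k,k) always holds, so the cover map never rules out a cycle of A.
-/

theorem IsAtom.supPrime {β : Type*} [DistribLattice β] [OrderBot β] {x : β} (hx : IsAtom x) :
    SupPrime x :=
  ⟨fun h => hx.1 h.eq_bot, fun _ _ h => by
    simpa only [← hx.not_disjoint_iff_le, disjoint_sup_right, not_and_or] using h⟩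

theorem IsAtom.le_compl_iff {β : Type*} [BooleanAlgebra β] {x a : β} (hx : IsAtom x) :
    x ≤ aᶜ ↔ ¬x ≤ a := by
  rw [le_compl_iff_disjoint_right, hx.not_le_iff_disjoint]

theorem exists_atom_le_of_le_map {β γ F : Type*} [BooleanAlgebra β] [Fintype β]
    [SemilatticeSup γ] [OrderBot γ] [FunLike F β γ] [SupBotHomClass F β γ] (f : F)
    {z : γ} (hz : SupPrime z) {a : β} (h : z ≤ f a) :
    ∃ x, IsAtom x ∧ x ≤ a ∧ z ≤ f x := by
  classical
  set S := Finset.univ.filter fun x : β => IsAtom x ∧ x ≤ a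
  have ha : a = S.sup id := BooleanAlgebra.eq_iff_atom_le_iff.mpr fun c hc => by
    refine ⟨fun hca => Finset.le_sup (f := id) (by simp [S, hc, hca]), fun hcS => ?_⟩
    obtain ⟨x, hxS, hcx⟩ := hc.supPrime.le_finset_sup.mp hcS
    exact hcx.trans (Finset.mem_filter.mp hxS).2.2
  rw [ha, map_finset_sup, hz.le_finset_sup] at h
  obtain ⟨x, hxS, hzx⟩ := h
  exact ⟨x, (Finset.mem_filter.mp hxS).2.1, (Finset.mem_filter.mp hxS).2.2, hzx⟩

namespace NA

variable {α : Type u} [NA α]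

theorem comp_bot (a : α) : comp a ⊥ = ⊥ := by
  simpa using (peirce1 a ⊥ (comp a ⊥)).mpr (by simp)

theorem bot_comp (a : α) : comp ⊥ a = ⊥ := by
  simpa using (peirce2 ⊥ a (comp ⊥ a)).mpr (by simp)

def compLeft (b : α) : SupBotHom α α where
  toFun a := comp a b
  map_sup' a a' := sup_comp a a' b
  map_bot' := bot_comp b

def compRight (a : α) : SupBotHom α α where
  toFun b := comp a b
  map_sup' := comp_sup a
  map_bot' := comp_bot a

theorem comp_le_comp {a a' b b' : α} (ha : a ≤ a') (hb : b ≤ b') : comp a b ≤ comp a' b' :=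
  (OrderHomClass.mono (compLeft b) ha).trans (OrderHomClass.mono (compRight a') hb)

theorem exists_atoms_le_of_atom_le_comp [Fintype α] {z a b : α} (hz : IsAtom z)
    (h : z ≤ comp a b) : ∃ x y, IsAtom x ∧ IsAtom y ∧ x ≤ a ∧ y ≤ b ∧ z ≤ comp x y := by
  obtain ⟨x, hx, hxa, hzx⟩ := exists_atom_le_of_le_map (compLeft b) hz.supPrime h
  obtain ⟨y, hy, hyb, hzy⟩ := exists_atom_le_of_le_map (compRight x) hz.supPrime hzx
  exact ⟨x, y, hx, hy, hxa, hyb, hzy⟩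

theorem DivAtom.not_le_ide {x : α} (hx : DivAtom x) : ¬x ≤ ide := fun h =>
  hx.1.ne_bot (le_bot_iff.mp ((le_inf h hx.2).trans inf_compl_eq_bot.le))

theorem isAtom_iff_eq_ide_or_divAtom (hint : Integral α) {x : α} :
    IsAtom x ↔ x = ide ∨ DivAtom x := by
  refine ⟨fun hx => ?_, fun h => h.elim (· ▸ hint) (·.1)⟩
  rcases hx.supPrime.le_sup.mp (le_top.trans_eq (sup_compl_eq_top (x := (ide : α))).symm)
    with h | h
  · exact Or.inl ((hint.le_iff_eq hx.ne_bot).mp h)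
  · exact Or.inr ⟨hx, h⟩

theorem ide_le_comp_self (hsym : Symmetric α) (hint : Integral α) {x : α} (hx : x ≠ ⊥) :
    ide ≤ comp x x := by
  have hne : comp x x ⊓ ide ≠ ⊥ := fun h => by
    rw [peirce1, hsym x, comp_ide, inf_idem] at h
    exact hx h
  exact (hint.le_iff_eq hne).mp inf_le_right ▸ inf_le_left

theorem eq_of_ide_le_comp (hsym : Symmetric α) (hint : Integral α) {x y : α}
    (hx : IsAtom x) (hy : IsAtom y) (h : ide ≤ comp x y) : x = y := by
  by_contra hxy
  have hdisj : comp x y ⊓ ide = ⊥ := by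
    rw [peirce1, hsym x, comp_ide]
    exact disjoint_iff.mp (hx.disjoint_of_ne hy hxy)
  exact hint.ne_bot (le_bot_iff.mp (hdisj ▸ le_inf h le_rfl))

def CAtom.base : CAtom α → α
  | none => ide
  | some p => p.1.1

theorem CAtom.isAtom_base (hint : Integral α) : ∀ w : CAtom α, IsAtom w.base
  | none => hint
  | some p => p.1.2.1

theorem CAtom.base_le_ide_iff : ∀ {w : CAtom α}, w.base ≤ ide ↔ w = none
  | none => by simp [base]
  | some p => by simpa [base] using p.1.2.not_le_ide

theorem CAtom.exists_base_eq (hint : Integral α) {x : α} (hx : IsAtom x) :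
    ∃ w : CAtom α, w.base = x := by
  rcases (isAtom_iff_eq_ide_or_divAtom hint).mp hx with rfl | hxd
  · exact ⟨none, rfl⟩
  · exact ⟨some (⟨x, hxd⟩, 0), rfl⟩

theorem mem_jel_zero {a : α} {w : CAtom α} : w ∈ Jel a 0 ↔ w.base ≤ a := by
  rcases w with _ | p
  · simp [Jel, CAtom.base]
  · simp only [Jel, Set.mem_ofPred_eq, Option.some.injEq, reduceCtorEq, false_and, or_false,
      zero_le, and_true, exists_eq_left', CAtom.base]

theorem cyc_none_left (cov : α → α) : ∀ w : CAtom α, Cyc cov none w w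
  | none => trivial
  | some _ => rfl

theorem cyc_none_right (cov : α → α) : ∀ w : CAtom α, Cyc cov w none w
  | none => trivial
  | some _ => rfl

theorem Cyc.base_le_comp (hsym : Symmetric α) (hint : Integral α) {cov : α → α} :
    ∀ {u v w : CAtom α}, Cyc cov u v w → w.base ≤ comp u.base v.base
  | none, none, none, _ => (ide_comp ide).ge
  | none, some _, some _, rfl => (ide_comp _).ge
  | some _, none, some _, rfl => (comp_ide _).ge
  | some p, some _, none, rfl => ide_le_comp_self hsym hint p.1.2.1.ne_bot
  | some _, some _, some _, h => h.1

theorem exists_cyc_of_base_le_comp (hsym : Symmetric α) (hint : Integral α) (cov : α → α)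
    {x y : α} (hx : IsAtom x) (hy : IsAtom y) {w : CAtom α} (h : w.base ≤ comp x y) :
    ∃ u v : CAtom α, u.base = x ∧ v.base = y ∧ Cyc cov u v w := by
  have hw := w.isAtom_base hint
  rcases (isAtom_iff_eq_ide_or_divAtom hint).mp hx with rfl | hxd
  · rw [ide_comp] at h
    exact ⟨none, w, rfl, (hy.le_iff_eq hw.ne_bot).mp h, cyc_none_left cov w⟩
  rcases (isAtom_iff_eq_ide_or_divAtom hint).mp hy with rfl | hyd
  · rw [comp_ide] at h
    exact ⟨w, none, (hx.le_iff_eq hw.ne_bot).mp h, rfl, cyc_none_right cov w⟩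
  cases w with
  | none =>
    obtain rfl := eq_of_ide_le_comp hsym hint hx hy h
    exact ⟨some (⟨x, hxd⟩, 0), some (⟨x, hxd⟩, 0), rfl, rfl, rfl⟩
  | some r =>
    exact ⟨some (⟨x, hxd⟩, r.2), some (⟨y, hyd⟩, r.2), rfl, rfl, h,
      fun _ => Or.inl ⟨le_rfl, rfl⟩⟩

theorem jel_injective [Fintype α] (hint : Integral α) :
    Function.Injective fun a : α => Jel a 0 := fun a b h =>
  BooleanAlgebra.eq_iff_atom_le_iff.mpr fun x hx => by
    obtain ⟨w, rfl⟩ := CAtom.exists_base_eq hint hx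
    simpa only [mem_jel_zero] using Set.ext_iff.mp h w

theorem jel_sup (hint : Integral α) (a b : α) : Jel (a ⊔ b) 0 = Jel a 0 ∪ Jel b 0 := by
  ext w
  simp only [Set.mem_union, mem_jel_zero, (w.isAtom_base hint).supPrime.le_sup]

theorem jel_compl (hint : Integral α) (a : α) : Jel aᶜ 0 = (Jel a 0)ᶜ := by
  ext w
  simp only [Set.mem_compl_iff, mem_jel_zero, (w.isAtom_base hint).le_compl_iff]

theorem jel_ide : Jel (ide : α) 0 = {none} := by
  ext w
  simp only [mem_jel_zero, CAtom.base_le_ide_iff, Set.mem_singleton_iff]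

theorem ccomp_jel_subset (hsym : Symmetric α) (hint : Integral α) (cov : α → α) (a b : α) :
    Ccomp cov (Jel a 0) (Jel b 0) ⊆ Jel (comp a b) 0 := by
  rintro w ⟨u, hu, v, hv, huvw⟩
  rw [mem_jel_zero] at hu hv ⊢
  exact (huvw.base_le_comp hsym hint).trans (comp_le_comp hu hv)

theorem jel_comp_subset [Fintype α] (hsym : Symmetric α) (hint : Integral α) (cov : α → α)
    (a b : α) : Jel (comp a b) 0 ⊆ Ccomp cov (Jel a 0) (Jel b 0) := by
  intro w hw
  obtain ⟨x, y, hx, hy, hxa, hyb, hwxy⟩ :=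
    exists_atoms_le_of_atom_le_comp (w.isAtom_base hint) (mem_jel_zero.mp hw)
  obtain ⟨u, v, rfl, rfl, huvw⟩ := exists_cyc_of_base_le_comp hsym hint cov hx hy hwxy
  exact ⟨u, mem_jel_zero.mpr hxa, v, mem_jel_zero.mpr hyb, huvw⟩

theorem jel_comp [Fintype α] (hsym : Symmetric α) (hint : Integral α) (cov : α → α)
    (a b : α) : Jel (comp a b) 0 = Ccomp cov (Jel a 0) (Jel b 0) :=
  (jel_comp_subset hsym hint cov a b).antisymm (ccomp_jel_subset hsym hint cov a b)

end NA

theorem stmt6_general {α : Type} [RA α] [Fintype α]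
    (hsym : NA.Symmetric α) (hint : NA.Integral α)
    (cov : α → α) :
    Function.Injective (fun a : α => NA.Jel a 0) ∧
    (∀ a b : α, NA.Jel (a ⊔ b) 0 = NA.Jel a 0 ∪ NA.Jel b 0) ∧
    (∀ a : α, NA.Jel aᶜ 0 = (NA.Jel a 0)ᶜ) ∧
    NA.Jel (NA.ide : α) 0 = ({none} : Set (NA.CAtom α)) ∧
    (∀ a b : α, NA.Jel (NA.comp a b) 0 = NA.Ccomp cov (NA.Jel a 0) (NA.Jel b 0)) ∧
    (∀ (x y z : α) (k : ℕ) (_ : NA.DivAtom x) (_ : NA.DivAtom y)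
      (hz : NA.DivAtom z),
      some (⟨z, hz⟩, k) ∈ NA.Ccomp cov (NA.Jel x 0) (NA.Jel y 0) ↔
        z ≤ NA.comp x y) :=
  ⟨NA.jel_injective hint, NA.jel_sup hint, NA.jel_compl hint, NA.jel_ide,
    NA.jel_comp hsym hint cov, fun x y z k _ _ hz => by
      rw [← NA.jel_comp hsym hint cov, NA.mem_jel_zero]
      rfl⟩

/-- For finite symmetric integral relation algebras E ⊆ A, the map
a ↦ J(a,0) is an embedding of A into C_E(A); in particular, for diversity atoms
x, y, z of A and k ∈ ω, z^(k) ≤ J(x,0);J(y,0) iff z ≤ x;y. -/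
theorem stmt6 {α : Type} [RA α] [Fintype α]
    (hsym : NA.Symmetric α) (hint : NA.Integral α)
    (E : NA.Subalgebra α) (cov : α → α) (hcov : NA.CoverMap E cov) :
    Function.Injective (fun a : α => NA.Jel a 0) ∧
    (∀ a b : α, NA.Jel (a ⊔ b) 0 = NA.Jel a 0 ∪ NA.Jel b 0) ∧
    (∀ a : α, NA.Jel aᶜ 0 = (NA.Jel a 0)ᶜ) ∧
    NA.Jel (NA.ide : α) 0 = ({none} : Set (NA.CAtom α)) ∧
    (∀ a b : α, NA.Jel (NA.comp a b) 0 = NA.Ccomp cov (NA.Jel a 0) (NA.Jel b 0)) ∧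
    (∀ (x y z : α) (k : ℕ) (_ : NA.DivAtom x) (_ : NA.DivAtom y)
      (hz : NA.DivAtom z),
      some (⟨z, hz⟩, k) ∈ NA.Ccomp cov (NA.Jel x 0) (NA.Jel y 0) ↔
        z ≤ NA.comp x y) :=
  stmt6_general hsym hint cov
end
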